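/- Let A be a guidable automaton whose language is recognised by an automaton B, and set n = |A|·|B| + 1. For every tree t ∈ L(A), letting ρ_A be the run of A on t guided by an accepting run ρ_B of B, the edge labelling L_A induced by ρ_A is n-bound by the labelling L_B induced by ρ_B. (Proof via pigeonhole: among n+1 segment endpoints there are two with equal state pairs, and the pumping lemma then forbids an odd-dominated segment of ρ_A against an even-dominated segment of ρ_B.) -/

import Mathlib

/-- A sequence of priorities is parity accepting if its limsup is even. -/
def ParityAccepting (c : ℕ → ℕ) : Prop :=
  ∃ p, Even p ∧ (∃ᶠ n in Filter.atTop, c n = p) ∧ (∀ᶠ n in Filter.atTop, c n ≤ p)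

/-- A nondeterministic parity tree automaton over the alphabet `A`: transitions are tuples
`(q, a, q₀, q₁)` and `Ω` assigns a pair of priorities to the two directions of each
transition. -/
structure NPA (A : Type) where
  Q : Type
  qinit : Q
  Δ : Set (Q × A × Q × Q)
  Ω : Q × A × Q × Q → ℕ × ℕ

namespace NPA

variable {A : Type}

/-- Tree positions are words over {0,1}, modelled as `List Bool`; the children of `u` are
`u ++ [false]` and `u ++ [true]`. -/
abbrev Pos := List Bool

/-- `ρ : Pos → Δ` is a run of the automaton `M` on the input tree `t`. -/
def IsRun (M : NPA A) (t : Pos → A) (ρ : Pos → M.Q × A × M.Q × M.Q) : Prop :=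
  (∀ u, ρ u ∈ M.Δ) ∧
  (∀ u, (ρ u).2.1 = t u) ∧
  (ρ []).1 = M.qinit ∧
  (∀ u (b : Bool), (ρ (u ++ [b])).1 = if b then (ρ u).2.2.2 else (ρ u).2.2.1)

/-- The prefix of length `m` of a branch `β`. -/
def pre (β : ℕ → Bool) (m : ℕ) : Pos := (List.range m).map β

/-- The priority seen at depth `m` along the branch `β` in the run `ρ`. -/
def branchPrio (M : NPA A) (ρ : Pos → M.Q × A × M.Q × M.Q) (β : ℕ → Bool) (m : ℕ) : ℕ :=
  if β m then (M.Ω (ρ (pre β m))).2 else (M.Ω (ρ (pre β m))).1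

/-- A run is accepting if the priority sequence of every branch is parity accepting. -/
def AcceptingRun (M : NPA A) (ρ : Pos → M.Q × A × M.Q × M.Q) : Prop :=
  ∀ β : ℕ → Bool, ParityAccepting (branchPrio M ρ β)

/-- `g` is a guiding function from `B` to `M`: `g (p, (q, a, q₀, q₁))` is a transition of
`M` from state `p` over the letter `a`. -/
def IsGuidingFun (M B : NPA A) (g : M.Q × (B.Q × A × B.Q × B.Q) → M.Q × A × M.Q × M.Q) :
    Prop :=
  ∀ p δ, (g (p, δ)).1 = p ∧ (g (p, δ)).2.1 = δ.2.1

/-- The run `ρM` is guided by the run `ρB` via `g`: at every position, the transition taken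
by `ρM` is obtained by applying `g` to its own source state and the transition of `ρB`. -/
def GuidedBy (M B : NPA A) (g : M.Q × (B.Q × A × B.Q × B.Q) → M.Q × A × M.Q × M.Q)
    (ρM : Pos → M.Q × A × M.Q × M.Q) (ρB : Pos → B.Q × A × B.Q × B.Q) : Prop :=
  ∀ u, ρM u = g ((ρM u).1, ρB u)

/-- `g` preserves acceptance: any guided run of `M` obtained from an accepting run of `B`
is accepting. -/
def PreservesAcceptance (M B : NPA A)
    (g : M.Q × (B.Q × A × B.Q × B.Q) → M.Q × A × M.Q × M.Q) : Prop :=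
  ∀ (t : Pos → A) ρB ρM, IsRun B t ρB → IsRun M t ρM → GuidedBy M B g ρM ρB →
    AcceptingRun B ρB → AcceptingRun M ρM

/-- The priority seen at step `m` of the path segment from `u` to `u ++ v` in the run `ρ`. -/
def segPrio (M : NPA A) (ρ : Pos → M.Q × A × M.Q × M.Q) (u v : Pos) (m : ℕ) : ℕ :=
  if v.getD m false then (M.Ω (ρ (u ++ v.take m))).2 else (M.Ω (ρ (u ++ v.take m))).1

/-- The greatest priority encountered on the path segment from `u` to `u ++ v`. -/
def segMax (M : NPA A) (ρ : Pos → M.Q × A × M.Q × M.Q) (u v : Pos) : ℕ :=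
  (Finset.range v.length).sup (segPrio M ρ u v)

end NPA

section Stmt16

variable {V : Type}

/-- The maximal `L`-label of the segment `[a, b)` of the path `π` equals `p`. -/
def MaxSegLabel (L : V × V → ℕ) (π : ℕ → V) (a b p : ℕ) : Prop :=
  (∀ l, a ≤ l → l < b → L (π l, π (l+1)) ≤ p) ∧ ∃ l, a ≤ l ∧ l < b ∧ L (π l, π (l+1)) = p

/-- `LI` is `n`-bound by `LJ`: there is no finite path segmented into `n+1` consecutive
nonempty segments such that, for some odd `i` and even `j`, every segment has maximal
`LI`-label `i` and maximal `LJ`-label `j`. -/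
def NBound (E : Set (V × V)) (LI LJ : V × V → ℕ) (n : ℕ) : Prop :=
  ¬ ∃ (π : ℕ → V) (t : ℕ → ℕ) (i j : ℕ),
      Odd i ∧ Even j ∧
      (∀ m ≤ n, t m < t (m+1)) ∧
      (∀ l < t (n+1), (π l, π (l+1)) ∈ E) ∧
      (∀ m ≤ n, MaxSegLabel LI π (t m) (t (m+1)) i ∧ MaxSegLabel LJ π (t m) (t (m+1)) j)

end Stmt16

namespace NPA

/-- The edges of the infinite binary tree of positions. -/
def treeEdges : Set (Pos × Pos) := {p | ∃ b : Bool, p.2 = p.1 ++ [b]}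

/-- The priority labelling of the edges of the binary tree induced by a run `ρ` of `M`. -/
def runLabel {A : Type} (M : NPA A) (ρ : Pos → M.Q × A × M.Q × M.Q) : Pos × Pos → ℕ :=
  fun p => if p.2 = p.1 ++ [true] then (M.Ω (ρ p.1)).2 else (M.Ω (ρ p.1)).1

end NPA

/-!
Suppose the path through the segment endpoints `τ 0 < ⋯ < τ (n+1)` violates the bound, with
odd `A`-maximum `i` and even `B`-maximum `j` on every segment. Among the `n + 2` endpoints two
carry the same pair of states of `ρA` and `ρB`; call them `u` and `u ++ v`. Pumping the
subtree at `u ++ v` back to `u` yields a tree on which `ρA`, `ρB` still induce runs, the one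
of `A` still guided by the one of `B`. The run of `B` stays accepting: a branch either
eventually leaves the pumped segment for good, and then it is a shifted branch of the original
run, or it repeats `v` forever, and then its limsup is the `B`-maximum `j` of the segment. By
acceptance preservation the run of `A` is accepting too, but along `u v v ⋯` its limsup is
the odd `A`-maximum `i` of the segment.
-/

open Filter

lemma add_one_mod_eq_ite {D : ℕ} (hD : 0 < D) (s : ℕ) :
    (s + 1) % D = if s % D + 1 = D then 0 else s % D + 1 := by
  conv_lhs => rw [← Nat.div_add_mod s D, add_assoc]
  split_ifs with h
  · rw [h, ← Nat.mul_succ, Nat.mul_mod_right]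
  · rw [Nat.mul_add_mod, Nat.mod_eq_of_lt (by have := Nat.mod_lt s hD; omega)]

lemma exists_lt_map_eq_of_card_lt {α : Type*} [Fintype α] (f : ℕ → α) {N : ℕ}
    (h : Fintype.card α < N) : ∃ m m', m < m' ∧ m' < N ∧ f m = f m' := by
  obtain ⟨x, hx, y, hy, hxy, hf⟩ := Finset.exists_ne_map_eq_of_card_lt_of_maps_to
    (s := Finset.range N) (t := Finset.univ) (by simpa using h) (f := f) (by simp)
  rw [Finset.mem_range] at hx hy
  rcases hxy.lt_or_gt with hlt | hlt
  · exact ⟨x, y, hlt, hy, hf⟩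
  · exact ⟨y, x, hlt, hx, hf.symm⟩

namespace List

lemma take_add_one_eq_append_getD {α : Type*} {l : List α} {r : ℕ} (hr : r < l.length)
    (d : α) : l.take (r + 1) = l.take r ++ [l.getD r d] := by
  rw [List.take_add_one, List.getElem?_eq_getElem hr, List.getD_eq_getElem _ _ hr]
  rfl

lemma getElem?_eq_of_take_append_prefix {α : Type*} {l : List α} {r : ℕ} {b : α}
    (h : l.take r ++ [b] <+: l) : l[r]? = some b := by
  have hr : r < l.length := by
    have := h.length_le
    simp only [List.length_append, List.length_take, List.length_singleton] at this
    omega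
  have h' := List.prefix_iff_eq_take.1 h
  rw [List.length_append, List.length_take_of_le hr.le, List.length_singleton,
    List.take_add_one, List.getElem?_eq_getElem hr] at h'
  simp only [Option.toList_some, List.append_cancel_left_eq, List.cons.injEq, and_true] at h'
  rw [List.getElem?_eq_getElem hr, h']

end List

lemma parityAccepting_iff_even {c : ℕ → ℕ} {p : ℕ} (hfreq : ∃ᶠ n in atTop, c n = p)
    (hev : ∀ᶠ n in atTop, c n ≤ p) : ParityAccepting c ↔ Even p := by
  have le_of_freq {p q : ℕ} (hp : ∃ᶠ n in atTop, c n = p) (hq : ∀ᶠ n in atTop, c n ≤ q) :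
      p ≤ q := by
    obtain ⟨n, hn, hnq⟩ := (hp.and_eventually hq).exists
    exact hn ▸ hnq
  refine ⟨fun ⟨q, hq, hqfreq, hqev⟩ => ?_, fun h => ⟨p, h, hfreq, hev⟩⟩
  rwa [le_antisymm (le_of_freq hfreq hqev) (le_of_freq hqfreq hev)]

lemma parityAccepting_iff_of_periodic {c f : ℕ → ℕ} {a D : ℕ} (hD : 0 < D)
    (hc : ∀ m ≥ a, c m = f ((m - a) % D)) :
    ParityAccepting c ↔ Even ((Finset.range D).sup f) := by
  obtain ⟨r, hr, hfr⟩ :=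
    Finset.exists_mem_eq_sup (Finset.range D) (Finset.nonempty_range_iff.2 hD.ne') f
  rw [Finset.mem_range] at hr
  refine parityAccepting_iff_even (frequently_atTop.2 fun N => ?_)
    (eventually_atTop.2 ⟨a, fun m hm => ?_⟩)
  · refine ⟨a + (N * D + r), by nlinarith, ?_⟩
    rw [hc _ (by omega), Nat.add_sub_cancel_left, Nat.mul_add_mod_of_lt hr, hfr]
  · rw [hc m hm]
    exact Finset.le_sup (Finset.mem_range.2 (Nat.mod_lt _ hD))

lemma parityAccepting_comp_add_iff (c : ℕ → ℕ) (a : ℕ) :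
    ParityAccepting (fun k => c (k + a)) ↔ ParityAccepting c := by
  unfold ParityAccepting
  refine exists_congr fun p => and_congr_right fun _ => and_congr ?_ ?_
  · conv_rhs => rw [← map_add_atTop_eq_nat a]
    exact (frequently_map (P := fun n => c n = p)).symm
  · conv_rhs => rw [← map_add_atTop_eq_nat a]
    exact (eventually_map (P := fun n => c n ≤ p)).symm

section Segments

variable {V : Type} {L : V × V → ℕ} {π : ℕ → V} {p : ℕ}

lemma MaxSegLabel.lt {a b : ℕ} (h : MaxSegLabel L π a b p) : a < b := by
  obtain ⟨-, l, hal, hlb, -⟩ := h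
  omega

lemma MaxSegLabel.trans {a b c : ℕ} (h₁ : MaxSegLabel L π a b p) (h₂ : MaxSegLabel L π b c p) :
    MaxSegLabel L π a c p := by
  have hbc := h₂.lt
  obtain ⟨hle₁, l, hal, hlb, hl⟩ := h₁
  refine ⟨fun k hak hkc => ?_, l, hal, by omega, hl⟩
  rcases lt_or_ge k b with hkb | hbk
  · exact hle₁ k hak hkb
  · exact h₂.1 k hbk hkc

lemma MaxSegLabel.of_consecutive {τ : ℕ → ℕ} {m m' : ℕ} (hmm' : m < m')
    (h : ∀ k, m ≤ k → k < m' → MaxSegLabel L π (τ k) (τ (k + 1)) p) :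
    MaxSegLabel L π (τ m) (τ m') p := by
  induction m', hmm' using Nat.le_induction with
  | base => exact h m le_rfl (Nat.lt_succ_self m)
  | succ k hk ih =>
    exact (ih fun l hml hlk => h l hml (by omega)).trans (h k (by omega) (Nat.lt_succ_self k))

end Segments

namespace NPA

variable {Alph : Type}

lemma pre_zero (β : ℕ → Bool) : pre β 0 = [] := rfl

lemma pre_succ (β : ℕ → Bool) (m : ℕ) : pre β (m + 1) = pre β m ++ [β m] := by
  simp [pre, List.range_succ]

lemma pre_add (β : ℕ → Bool) (a k : ℕ) : pre β (a + k) = pre β a ++ pre (fun s => β (a + s)) k := by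
  simp [pre, List.range_add, Function.comp_def]

def splice (w : Pos) (β : ℕ → Bool) : ℕ → Bool :=
  fun l => if l < w.length then w.getD l false else β (l - w.length)

lemma splice_add (w : Pos) (β : ℕ → Bool) (k : ℕ) : splice w β (w.length + k) = β k := by
  simp [splice]

lemma pre_splice_add (w : Pos) (β : ℕ → Bool) (k : ℕ) :
    pre (splice w β) (w.length + k) = w ++ pre β k := by
  have hw : pre (splice w β) w.length = w := by
    refine List.ext_getElem (by simp [pre]) fun l h₁ h₂ => ?_
    simp [pre, splice, h₂]
  rw [pre_add, hw]
  simp only [splice_add]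

lemma GuidedBy.comp {B M : NPA Alph} {g : M.Q × (B.Q × Alph × B.Q × B.Q) → M.Q × Alph × M.Q × M.Q}
    {ρM : Pos → M.Q × Alph × M.Q × M.Q} {ρB : Pos → B.Q × Alph × B.Q × B.Q}
    (h : GuidedBy M B g ρM ρB) (f : Pos → Pos) : GuidedBy M B g (ρM ∘ f) (ρB ∘ f) :=
  fun w => h (f w)

lemma AcceptingRun.parityAccepting_comp {M : NPA Alph} {ρ : Pos → M.Q × Alph × M.Q × M.Q}
    (hacc : AcceptingRun M ρ) {f : Pos → Pos} {β : ℕ → Bool} {m₀ : ℕ}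
    (hf : ∀ m ≥ m₀, f (pre β (m + 1)) = f (pre β m) ++ [β m]) :
    ParityAccepting (branchPrio M (ρ ∘ f) β) := by
  set w := f (pre β m₀)
  set γ := splice w fun k => β (m₀ + k)
  have hpos (k : ℕ) : f (pre β (m₀ + k)) = pre γ (w.length + k) := by
    rw [pre_splice_add]
    induction k with
    | zero => rw [add_zero, pre_zero, List.append_nil]
    | succ k ih => rw [← add_assoc, hf _ (by omega), ih, pre_succ, List.append_assoc]
  have hγ (k : ℕ) : γ (w.length + k) = β (m₀ + k) := splice_add _ _ k
  rw [← parityAccepting_comp_add_iff _ m₀]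
  convert (parityAccepting_comp_add_iff _ w.length).2 (hacc γ) using 2 with k
  simp only [branchPrio, Function.comp_apply, add_comm k, hpos, hγ]

section Pumping

variable (u v : Pos)

def pumpStep (x : Pos) (b : Bool) : Pos := if x ++ [b] = u ++ v then u else x ++ [b]

/-- Read `w` from the root, jumping back to `u` whenever `u ++ v` is reached: `t ∘ pump u v`
is `t` with the segment from `u` to `u ++ v` repeated forever. -/
def pump (w : Pos) : Pos := w.foldl (pumpStep u v) []

variable {u v}

lemma pump_append_singleton (w : Pos) (b : Bool) :
    pump u v (w ++ [b]) = pumpStep u v (pump u v w) b := by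
  simp [pump, List.foldl_append]

lemma pump_pre_succ (β : ℕ → Bool) (m : ℕ) :
    pump u v (pre β (m + 1)) = pumpStep u v (pump u v (pre β m)) (β m) := by
  rw [pre_succ, pump_append_singleton]

lemma pumpStep_of_not_prefix {x : Pos} {b : Bool} (h : ¬ x ++ [b] <+: u ++ v) :
    pumpStep u v x b = x ++ [b] := by
  rw [pumpStep, if_neg]
  rintro heq
  exact h (heq ▸ List.prefix_refl _)

lemma pumpStep_eq_of_ne {x : Pos} {b : Bool} (h : pumpStep u v x b ≠ x ++ [b]) :
    pumpStep u v x b = u := by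
  unfold pumpStep at h ⊢
  split_ifs at h ⊢
  · rfl
  · exact absurd rfl h

lemma pump_of_length_le (hv : v ≠ []) (w : Pos) (hw : w.length ≤ u.length) : pump u v w = w := by
  induction w using List.reverseRecOn with
  | nil => rfl
  | append_singleton w b ih =>
    have hlen : (w ++ [b]).length < (u ++ v).length := by
      simp only [List.length_append] at hw ⊢
      have := List.length_pos_iff.2 hv
      omega
    rw [pump_append_singleton, ih (by simp at hw; omega), pumpStep,
      if_neg fun h => hlen.ne (congrArg List.length h)]

lemma IsRun.comp_pump {M : NPA Alph} {t : Pos → Alph} {ρ : Pos → M.Q × Alph × M.Q × M.Q}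
    (h : IsRun M t ρ) (huv : (ρ u).1 = (ρ (u ++ v)).1) :
    IsRun M (t ∘ pump u v) (ρ ∘ pump u v) := by
  obtain ⟨hΔ, ht, hroot, hsucc⟩ := h
  refine ⟨fun w => hΔ _, fun w => ht _, hroot, fun w b => ?_⟩
  simp only [Function.comp_apply, pump_append_singleton, pumpStep]
  by_cases hjump : pump u v w ++ [b] = u ++ v
  · rw [if_pos hjump, huv, ← hjump, hsucc]
  · rw [if_neg hjump, hsucc]

lemma pump_pre_succ_of_not_prefix {β : ℕ → Bool} {m : ℕ}
    (h : ¬ pump u v (pre β m) ++ [β m] <+: u ++ v) :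
    ∀ k ≥ m, pump u v (pre β (k + 1)) = pump u v (pre β k) ++ [β k] := by
  have hdiv : ∀ k ≥ m, ¬ pump u v (pre β k) ++ [β k] <+: u ++ v := by
    intro k hk
    induction k, hk using Nat.le_induction with
    | base => exact h
    | succ k _ ih =>
      rw [pump_pre_succ, pumpStep_of_not_prefix ih]
      exact fun hp => ih ((List.prefix_append _ _).trans hp)
  exact fun k hk => by rw [pump_pre_succ, pumpStep_of_not_prefix (hdiv k hk)]

lemma pump_pre_of_periodic (hv : v ≠ []) {β : ℕ → Bool} {a : ℕ} (ha : pump u v (pre β a) = u) :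
    ∀ m ≥ a, (∀ m', a ≤ m' → m' < m → β m' = v.getD ((m' - a) % v.length) false) →
      pump u v (pre β m) = u ++ v.take ((m - a) % v.length) := by
  have hD := List.length_pos_iff.2 hv
  intro m hm
  induction m, hm using Nat.le_induction with
  | base => exact fun _ => by simpa using ha
  | succ m hm ih =>
    intro hβ
    have hr : (m - a) % v.length < v.length := Nat.mod_lt _ hD
    rw [pump_pre_succ, ih fun m' h₁ h₂ => hβ m' h₁ (by omega), hβ m hm (Nat.lt_succ_self m),
      pumpStep, List.append_assoc, ← List.take_add_one_eq_append_getD hr,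
      show m + 1 - a = m - a + 1 by omega, add_one_mod_eq_ite hD]
    by_cases hlast : (m - a) % v.length + 1 = v.length
    · rw [if_pos hlast, hlast, List.take_length, if_pos rfl, List.take_zero, List.append_nil]
    · rw [if_neg hlast, if_neg]
      intro heq
      have := congrArg List.length (List.append_cancel_left heq)
      simp only [List.length_take] at this
      omega

lemma branchPrio_comp_pump_of_periodic (hv : v ≠ []) {M : NPA Alph}
    (ρ : Pos → M.Q × Alph × M.Q × M.Q) {β : ℕ → Bool} {a : ℕ} (ha : pump u v (pre β a) = u)
    (hβ : ∀ m ≥ a, β m = v.getD ((m - a) % v.length) false) :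
    ∀ m ≥ a, branchPrio M (ρ ∘ pump u v) β m = segPrio M ρ u v ((m - a) % v.length) := by
  intro m hm
  simp only [branchPrio, segPrio, Function.comp_apply,
    pump_pre_of_periodic hv ha m hm fun m' h _ => hβ m' h, hβ m hm]

lemma parityAccepting_comp_pump_iff (hv : v ≠ []) {M : NPA Alph}
    (ρ : Pos → M.Q × Alph × M.Q × M.Q) {β : ℕ → Bool} {a : ℕ} (ha : pump u v (pre β a) = u)
    (hβ : ∀ m ≥ a, β m = v.getD ((m - a) % v.length) false) :
    ParityAccepting (branchPrio M (ρ ∘ pump u v) β) ↔ Even (segMax M ρ u v) :=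
  parityAccepting_iff_of_periodic (List.length_pos_iff.2 hv)
    (branchPrio_comp_pump_of_periodic hv ρ ha hβ)

lemma periodic_of_frequently_jump (hv : v ≠ []) {β : ℕ → Bool}
    (hjump : ∀ m₀, ∃ m ≥ m₀, pump u v (pre β (m + 1)) ≠ pump u v (pre β m) ++ [β m])
    {a : ℕ} (ha : pump u v (pre β a) = u) :
    ∀ m ≥ a, β m = v.getD ((m - a) % v.length) false := by
  intro m hm
  induction m using Nat.strong_induction_on with
  | _ m ih =>
    have hx := pump_pre_of_periodic hv ha m hm fun m' h₁ h₂ => ih m' h₂ h₁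
    by_contra hne
    obtain ⟨k, hk, hjk⟩ := hjump m
    refine hjk (pump_pre_succ_of_not_prefix (fun hp => hne ?_) k hk)
    rw [hx, List.append_assoc, List.prefix_append_right_inj] at hp
    rw [List.getD_eq_getElem?_getD, List.getElem?_eq_of_take_append_prefix hp, Option.getD_some]

lemma AcceptingRun.comp_pump (hv : v ≠ []) {M : NPA Alph} {ρ : Pos → M.Q × Alph × M.Q × M.Q}
    (hacc : AcceptingRun M ρ) (heven : Even (segMax M ρ u v)) :
    AcceptingRun M (ρ ∘ pump u v) := by
  intro β
  by_cases hfin : ∃ m₀, ∀ m ≥ m₀, pump u v (pre β (m + 1)) = pump u v (pre β m) ++ [β m]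
  · obtain ⟨m₀, h⟩ := hfin
    exact hacc.parityAccepting_comp h
  · push Not at hfin
    obtain ⟨m, -, hm⟩ := hfin 0
    rw [pump_pre_succ] at hm
    have ha : pump u v (pre β (m + 1)) = u := by rw [pump_pre_succ, pumpStep_eq_of_ne hm]
    exact (parityAccepting_comp_pump_iff hv ρ ha (periodic_of_frequently_jump hv hfin ha)).2 heven

variable (u v) in
def spine : ℕ → Bool := splice u fun k => v.getD (k % v.length) false

lemma pump_pre_spine (hv : v ≠ []) : pump u v (pre (spine u v) u.length) = u := by
  have := pre_splice_add u (fun k => v.getD (k % v.length) false) 0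
  rw [add_zero, pre_zero, List.append_nil] at this
  rw [spine, this, pump_of_length_le hv u le_rfl]

lemma spine_of_le {m : ℕ} (hm : u.length ≤ m) :
    spine u v m = v.getD ((m - u.length) % v.length) false := by
  rw [spine, splice, if_neg (not_lt.2 hm)]

/-- The pumping lemma. -/
theorem even_segMax_of_guidedBy {A B : NPA Alph} {t : Pos → Alph}
    {ρA : Pos → A.Q × Alph × A.Q × A.Q} {ρB : Pos → B.Q × Alph × B.Q × B.Q}
    (hrunA : IsRun A t ρA) (hrunB : IsRun B t ρB) (haccB : AcceptingRun B ρB)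
    {g : A.Q × (B.Q × Alph × B.Q × B.Q) → A.Q × Alph × A.Q × A.Q}
    (hpres : PreservesAcceptance A B g) (hguided : GuidedBy A B g ρA ρB) (hv : v ≠ [])
    (hA : (ρA u).1 = (ρA (u ++ v)).1) (hB : (ρB u).1 = (ρB (u ++ v)).1)
    (heven : Even (segMax B ρB u v)) : Even (segMax A ρA u v) := by
  have haccA : AcceptingRun A (ρA ∘ pump u v) :=
    hpres _ _ _ (hrunB.comp_pump hB) (hrunA.comp_pump hA) (hguided.comp _)
      (haccB.comp_pump hv heven)
  exact (parityAccepting_comp_pump_iff hv ρA (pump_pre_spine hv)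
    (fun m hm => spine_of_le hm)).1 (haccA (spine u v))

end Pumping

lemma exists_word_of_path {π : ℕ → Pos} {a b : ℕ} (hab : a ≤ b)
    (hπ : ∀ l, a ≤ l → l < b → (π l, π (l + 1)) ∈ treeEdges) :
    ∃ v : Pos, v.length = b - a ∧ ∀ s ≤ v.length, π (a + s) = π a ++ v.take s := by
  induction b, hab using Nat.le_induction with
  | base => exact ⟨[], by simp, fun s hs => by simp [Nat.le_zero.1 hs]⟩
  | succ b hab ih =>
    obtain ⟨v, hlen, hv⟩ := ih fun l h₁ h₂ => hπ l h₁ (by omega)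
    obtain ⟨c, hc⟩ : ∃ c : Bool, π (b + 1) = π b ++ [c] := hπ b hab (Nat.lt_succ_self b)
    refine ⟨v ++ [c], by simp; omega, fun s hs => ?_⟩
    rw [List.length_append, List.length_singleton] at hs
    rcases Nat.lt_or_ge s (b + 1 - a) with hs' | hs'
    · rw [List.take_append_of_le_length (by omega), hv s (by omega)]
    · rw [List.take_of_length_le (by simp; omega), show a + s = b + 1 by omega, hc,
        show b = a + v.length by omega, hv _ le_rfl, List.take_length, List.append_assoc]

section PathSegments

variable {π : ℕ → Pos} {a : ℕ} {v : Pos}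

lemma runLabel_eq_segPrio (hπ : ∀ s ≤ v.length, π (a + s) = π a ++ v.take s) {M : NPA Alph}
    (ρ : Pos → M.Q × Alph × M.Q × M.Q) {s : ℕ} (hs : s < v.length) :
    runLabel M ρ (π (a + s), π (a + s + 1)) = segPrio M ρ (π a) v s := by
  have hstep : π (a + s + 1) = π (a + s) ++ [v.getD s false] := by
    rw [add_assoc, hπ (s + 1) hs, hπ s hs.le, List.take_add_one_eq_append_getD hs,
      List.append_assoc]
  simp only [runLabel, segPrio, hstep, ← hπ s hs.le]
  cases v.getD s false <;> simp

lemma segMax_eq_of_maxSegLabel (hπ : ∀ s ≤ v.length, π (a + s) = π a ++ v.take s)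
    {M : NPA Alph} {ρ : Pos → M.Q × Alph × M.Q × M.Q} {p : ℕ}
    (h : MaxSegLabel (runLabel M ρ) π a (a + v.length) p) : segMax M ρ (π a) v = p := by
  obtain ⟨hle, l, hal, hlb, hl⟩ := h
  refine le_antisymm (Finset.sup_le fun s hs => ?_) ?_
  · rw [Finset.mem_range] at hs
    rw [← runLabel_eq_segPrio hπ ρ hs]
    exact hle _ (by omega) (by omega)
  · rw [← hl, show l = a + (l - a) by omega, runLabel_eq_segPrio hπ ρ (by omega)]
    exact Finset.le_sup (Finset.mem_range.2 (by omega))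

end PathSegments

end NPA

open NPA in
theorem guided_run_nbound_general {Alph : Type} (A B : NPA Alph)
    [Fintype A.Q] [Fintype B.Q] (t : NPA.Pos → Alph)
    (ρA : NPA.Pos → A.Q × Alph × A.Q × A.Q) (ρB : NPA.Pos → B.Q × Alph × B.Q × B.Q)
    (hrunA : IsRun A t ρA) (hrunB : IsRun B t ρB)
    (haccB : AcceptingRun B ρB)
    (g : A.Q × (B.Q × Alph × B.Q × B.Q) → A.Q × Alph × A.Q × A.Q)
    (hpres : PreservesAcceptance A B g)
    (hguided : GuidedBy A B g ρA ρB) :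
    NBound treeEdges (runLabel A ρA) (runLabel B ρB)
      (Fintype.card A.Q * Fintype.card B.Q + 1) := by
  rintro ⟨π, τ, i, j, hi, hj, -, hedge, hseg⟩
  set n := Fintype.card A.Q * Fintype.card B.Q + 1
  obtain ⟨m, m', hmm', hm'n, hstates⟩ := exists_lt_map_eq_of_card_lt
    (fun k => ((ρA (π (τ k))).1, (ρB (π (τ k))).1)) (N := n + 2) (by simp [n]; omega)
  have hseg' {k k' : ℕ} (hkk' : k < k') (hk' : k' ≤ n + 1) :
      MaxSegLabel (runLabel A ρA) π (τ k) (τ k') i ∧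
        MaxSegLabel (runLabel B ρB) π (τ k) (τ k') j :=
    ⟨.of_consecutive hkk' fun l _ hl => (hseg l (by omega)).1,
      .of_consecutive hkk' fun l _ hl => (hseg l (by omega)).2⟩
  have hend : τ m' ≤ τ (n + 1) := by
    rcases (show m' ≤ n + 1 by omega).lt_or_eq with h | h
    · exact (hseg' h le_rfl).1.lt.le
    · rw [h]
  obtain ⟨hA, hB⟩ := hseg' hmm' (by omega)
  have hτ := hA.lt
  obtain ⟨v, hvlen, hπ⟩ := exists_word_of_path hτ.le fun l _ hl => hedge l (by omega)
  have hm' : τ m' = τ m + v.length := by omega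
  have hu : π (τ m') = π (τ m) ++ v := by rw [hm', hπ _ le_rfl, List.take_length]
  have hv : v ≠ [] := List.ne_nil_of_length_pos (by omega)
  rw [hm'] at hA hB
  obtain ⟨hqA, hqB⟩ := Prod.mk.inj hstates
  refine Nat.not_even_iff_odd.2 hi ?_
  rw [← segMax_eq_of_maxSegLabel hπ hA]
  exact even_segMax_of_guidedBy hrunA hrunB haccB hpres hguided hv (hu ▸ hqA) (hu ▸ hqB)
    (segMax_eq_of_maxSegLabel hπ hB ▸ hj)

open NPA in
/-- if the language of a guidable automaton A is recognised by B, then for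
n = |A|·|B| + 1, for every accepting run ρ_B of B on a tree t and the run ρ_A of A on t
guided by ρ_B (via an acceptance-preserving guiding function), the labelling induced by
ρ_A is n-bound by the labelling induced by ρ_B. -/
theorem guided_run_nbound {Alph : Type} (A B : NPA Alph)
    [Fintype A.Q] [Fintype B.Q] (t : NPA.Pos → Alph)
    (ρA : NPA.Pos → A.Q × Alph × A.Q × A.Q) (ρB : NPA.Pos → B.Q × Alph × B.Q × B.Q)
    (hrunA : IsRun A t ρA) (hrunB : IsRun B t ρB)
    (haccB : AcceptingRun B ρB)
    (g : A.Q × (B.Q × Alph × B.Q × B.Q) → A.Q × Alph × A.Q × A.Q)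
    (hg : IsGuidingFun A B g) (hpres : PreservesAcceptance A B g)
    (hguided : GuidedBy A B g ρA ρB) :
    NBound treeEdges (runLabel A ρA) (runLabel B ρB)
      (Fintype.card A.Q * Fintype.card B.Q + 1) :=
  guided_run_nbound_general A B t ρA ρB hrunA hrunB haccB g hpres hguided
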